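/- In the WMM-S abstract machine, the IRIW outcome with only Reconcile fences is reachable: for the program P1: St a 1; P2: r1 = Ld a; Reconcile; r2 = Ld b; P3: St b 1; P4: r3 = Ld b; Reconcile; r4 = Ld a (a ≠ b, initialized to 0), there is a sequence of WMM-S operations (including WMM-S-Copy of P1's store into P2's sb and of P3's store into P4's sb) yielding r1 = 1, r2 = 0, r3 = 1, r4 = 0, with all copy operations preserving acyclicity of the partial coherence order. -/
import Mathlib


/-- Instruction operations of the WMM axiomatic model. -/
inductive IOp
  | ld (a : ℕ)
  | st (a : ℕ) (v : ℕ)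
  | commit
  | reconcile
  | nm
  deriving DecidableEq

/-- A tagged store-buffer entry: copies of a store share its tag. -/
structure SEnt where
  tag : ℕ
  addr : ℕ
  val : ℕ
  deriving DecidableEq

def hasA (l : List SEnt) (a : ℕ) : Prop := a ∈ l.map SEnt.addr

instance (l : List SEnt) (a : ℕ) : Decidable (hasA l a) :=
  inferInstanceAs (Decidable (a ∈ l.map SEnt.addr))

def hasTag (l : List SEnt) (t : ℕ) : Prop := t ∈ l.map SEnt.tag

instance (l : List SEnt) (t : ℕ) : Decidable (hasTag l t) :=
  inferInstanceAs (Decidable (t ∈ l.map SEnt.tag))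

def remA (l : List SEnt) (a : ℕ) : List SEnt := l.filter (fun e => e.addr ≠ a)

abbrev IBuf := List (ℕ × ℕ)

def ibHasA (l : IBuf) (a : ℕ) : Prop := a ∈ l.map Prod.fst

instance (l : IBuf) (a : ℕ) : Decidable (ibHasA l a) :=
  inferInstanceAs (Decidable (a ∈ l.map Prod.fst))

def ibRemA (l : IBuf) (a : ℕ) : IBuf := l.filter (fun e => e.1 ≠ a)

/-- State of the WMM-S abstract machine.  Store buffers keep the newest entry
at the head; `next` generates fresh store tags. -/
structure SSt where
  cnt : ℕ → ℕ
  res : ℕ → ℕ → ℕ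
  mem : ℕ → ℕ
  sb : ℕ → List SEnt
  ib : ℕ → IBuf
  next : ℕ

/-- One step of the per-buffer same-address ordering on tags: `t1` is an older
store than `t2` for the same address in some store buffer. -/
def coStep (s : SSt) (t1 t2 : ℕ) : Prop :=
  ∃ (i : ℕ) (l1 l2 l3 : List SEnt) (e2 e1 : SEnt),
    s.sb i = l1 ++ e2 :: l2 ++ e1 :: l3 ∧ e1.addr = e2.addr ∧
    e1.tag = t1 ∧ e2.tag = t2

/-- The partial coherence order `<_co`: the transitive closure of the
per-buffer same-address orderings of all store buffers. -/
def co (s : SSt) : ℕ → ℕ → Prop := Relation.TransGen (coStep s)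

/-- Operations of the WMM-S abstract machine. -/
def setRes (res : ℕ → ℕ → ℕ) (i k v : ℕ) : ℕ → ℕ → ℕ :=
  fun j l => if j = i ∧ l = k then v else res j l

/-- Operations of the WMM-S abstract machine executing a program `prog`. -/
inductive SStep (prog : ℕ → ℕ → IOp) : SSt → SSt → Prop
  | nm (s : SSt) (i : ℕ) (h : prog i (s.cnt i) = IOp.nm) :
      SStep prog s { s with cnt := Function.update s.cnt i (s.cnt i + 1) }
  /-- Store execution: insert a store with a fresh tag into the local `sb`,
  purge the address from the local `ib`. -/
  | store (s : SSt) (i a v : ℕ) (h : prog i (s.cnt i) = IOp.st a v) :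
      SStep prog s
        { s with sb := Function.update s.sb i (⟨s.next, a, v⟩ :: s.sb i),
                 ib := Function.update s.ib i (ibRemA (s.ib i) a),
                 next := s.next + 1,
                 cnt := Function.update s.cnt i (s.cnt i + 1) }
  /-- WMM-S-Copy: copy a store from the `sb` of processor `i` into the `sb` of
  processor `j` (same tag), allowed only if the partial coherence order stays
  acyclic; the address is purged from the `ib` of processor `j`. -/
  | copy (s : SSt) (i j : ℕ) (e : SEnt)
      (hij : i ≠ j) (he : e ∈ s.sb i) (hnt : ¬ hasTag (s.sb j) e.tag)
      (hacyc : ∀ t, ¬ co { s with sb := Function.update s.sb j (e :: s.sb j),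
                                  ib := Function.update s.ib j (ibRemA (s.ib j) e.addr) } t t) :
      SStep prog s { s with sb := Function.update s.sb j (e :: s.sb j),
                            ib := Function.update s.ib j (ibRemA (s.ib j) e.addr) }
  /-- Load from the youngest same-address entry of the local `sb`. -/
  | ldSb (s : SSt) (i : ℕ) (e : SEnt) (l1 l2 : List SEnt)
      (h : prog i (s.cnt i) = IOp.ld e.addr)
      (hsb : s.sb i = l1 ++ e :: l2) (hy : ¬ hasA l1 e.addr) :
      SStep prog s
        { s with res := setRes s.res i (s.cnt i) e.val,
                 cnt := Function.update s.cnt i (s.cnt i + 1) }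
  /-- Load from the atomic memory. -/
  | ldMem (s : SSt) (i a : ℕ) (h : prog i (s.cnt i) = IOp.ld a)
      (hn : ¬ hasA (s.sb i) a) :
      SStep prog s
        { s with res := setRes s.res i (s.cnt i) (s.mem a),
                 ib := Function.update s.ib i (ibRemA (s.ib i) a),
                 cnt := Function.update s.cnt i (s.cnt i + 1) }
  /-- Load of a stale value from the local `ib`. -/
  | ldIb (s : SSt) (i a v : ℕ) (l1 l2 : IBuf) (h : prog i (s.cnt i) = IOp.ld a)
      (hn : ¬ hasA (s.sb i) a) (hib : s.ib i = l1 ++ (a, v) :: l2) :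
      SStep prog s
        { s with res := setRes s.res i (s.cnt i) v,
                 ib := Function.update s.ib i (l1 ++ (a, v) :: ibRemA l2 a),
                 cnt := Function.update s.cnt i (s.cnt i + 1) }
  | commit (s : SSt) (i : ℕ) (h : prog i (s.cnt i) = IOp.commit)
      (he : s.sb i = []) :
      SStep prog s { s with cnt := Function.update s.cnt i (s.cnt i + 1) }
  | reconcile (s : SSt) (i : ℕ) (h : prog i (s.cnt i) = IOp.reconcile) :
      SStep prog s
        { s with ib := Function.update s.ib i [],
                 cnt := Function.update s.cnt i (s.cnt i + 1) }
  /-- WMM-S-DeqSb: dequeue a store all of whose copies are the oldest for the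
  address in their buffers; remove all copies, update the memory, and insert
  the overwritten stale value into the `ib` of every processor whose `sb` does
  not contain the address. -/
  | deqSb (s : SSt) (t a v : ℕ)
      (hex : ∃ j, ⟨t, a, v⟩ ∈ s.sb j)
      (hold : ∀ j, ∀ e ∈ s.sb j, e.tag = t →
        e.addr = a ∧ e.val = v ∧
        ∃ l1 l2, s.sb j = l1 ++ e :: l2 ∧ ¬ hasA l2 a) :
      SStep prog s
        { s with mem := Function.update s.mem a v,
                 sb := fun j => (s.sb j).filter (fun e => e.tag ≠ t),
                 ib := fun j => if hasA ((s.sb j).filter (fun e => e.tag ≠ t)) a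
                                then s.ib j else (a, s.mem a) :: s.ib j }

def SInit (m0 : ℕ → ℕ) : SSt :=
  { mem := m0, sb := fun _ => [], ib := fun _ => [], next := 1,
    cnt := fun _ => 0, res := fun _ _ => 0 }

/-- The IRIW program with Reconcile fences: P0: St a 1; P1: Ld a; Reconcile;
Ld b; P2: St b 1; P3: Ld b; Reconcile; Ld a. -/
def iriwProg (a b : ℕ) : ℕ → ℕ → IOp := fun i k =>
  match i, k with
  | 0, 0 => IOp.st a 1
  | 1, 0 => IOp.ld a
  | 1, 1 => IOp.reconcile
  | 1, 2 => IOp.ld b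
  | 2, 0 => IOp.st b 1
  | 3, 0 => IOp.ld b
  | 3, 1 => IOp.reconcile
  | 3, 2 => IOp.ld a
  | _, _ => IOp.nm

lemma no_co_of_short (s : SSt) (h : ∀ i, (s.sb i).length ≤ 1) : ∀ t, ¬ co s t t := by
  have hstep : ∀ t1 t2, ¬ coStep s t1 t2 := by
    rintro t1 t2 ⟨i, l1, l2, l3, e2, e1, hsb, -, -, -⟩
    have hi := h i
    rw [hsb] at hi
    simp [List.length_append] at hi
    omega
  intro t hco
  cases hco with
  | single h' => exact hstep _ _ h'
  | tail _ h' => exact hstep _ _ h'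

/-- in the WMM-S machine the IRIW outcome with only Reconcile
fences is reachable (by copying P0's store into P1's sb and P2's store into
P3's sb, with all copies preserving acyclicity of the partial coherence
order): r1 = 1, r2 = 0, r3 = 1, r4 = 0. -/
theorem wmms_IRIW_allowed (a b : ℕ) (hab : a ≠ b) :
    ∃ s : SSt,
      Relation.ReflTransGen (SStep (iriwProg a b)) (SInit (fun _ => 0)) s ∧
      1 ≤ s.cnt 0 ∧ 3 ≤ s.cnt 1 ∧ 1 ≤ s.cnt 2 ∧ 3 ≤ s.cnt 3 ∧
      s.res 1 0 = 1 ∧ s.res 1 2 = 0 ∧ s.res 3 0 = 1 ∧ s.res 3 2 = 0 := by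
  refine ⟨?_, ?steps, ?_, ?_, ?_, ?_, ?_, ?_, ?_, ?_⟩
  case steps =>
    -- step 1: P0 stores a 1 (tag 1)
    refine .trans (.single (SStep.store _ 0 a 1 rfl)) ?_
    -- step 2: P2 stores b 1 (tag 2)
    refine .trans (.single (SStep.store _ 2 b 1 rfl)) ?_
    -- step 3: copy P0's store into P1's sb
    refine .trans (.single (SStep.copy _ 0 1 ⟨1, a, 1⟩ (by decide) (by simp [SInit]) (by simp [hasTag, SInit])
      (no_co_of_short _ (by
        intro i
        simp only [SInit, Function.update_apply]
        split_ifs <;> first | simp_all | omega | exact (‹False›).elim)))) ?_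
    -- step 4: copy P2's store into P3's sb
    refine .trans (.single (SStep.copy _ 2 3 ⟨2, b, 1⟩ (by decide) (by simp [SInit]) (by simp [hasTag, SInit])
      (no_co_of_short _ (by
        intro i
        simp only [SInit, Function.update_apply]
        split_ifs <;> first | simp_all | omega | exact (‹False›).elim)))) ?_
    -- step 5: P1 loads a from its sb (value 1)
    refine .trans (.single (SStep.ldSb _ 1 ⟨1, a, 1⟩ [] [] rfl (by simp [SInit]) (by simp [hasA]))) ?_
    -- step 6: P1 reconcile
    refine .trans (.single (SStep.reconcile _ 1 rfl)) ?_
    -- step 7: P1 loads b from memory (value 0)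
    refine .trans (.single (SStep.ldMem _ 1 b rfl (by
      simp [hasA, SInit, Ne.symm hab]))) ?_
    -- step 8: P3 loads b from its sb (value 1)
    refine .trans (.single (SStep.ldSb _ 3 ⟨2, b, 1⟩ [] [] rfl (by simp [SInit]) (by simp [hasA]))) ?_
    -- step 9: P3 reconcile
    refine .trans (.single (SStep.reconcile _ 3 rfl)) ?_
    -- step 10: P3 loads a from memory (value 0)
    refine .trans (.single (SStep.ldMem _ 3 a rfl (by
      simp [hasA, SInit, hab]))) ?_
    exact .refl
  all_goals simp [SInit, setRes, Function.update_apply]
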